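/- Under the hypotheses of the contraction result (μ(∂F/∂x(t,x)) ≤ c on a convex invariant set 𝒳), for all x₁, x₂ ∈ 𝒳 and t ≥ 0: limsup_{(z₁,z₂)→(x₁,x₂), z₁−z₂∉S} d(z₁−z₂)·(F(t,x₁) − F(t,x₂)) ≤ c |x₁ − x₂|, where d(z) = ∇|z| for z ∉ S. -/

import Mathlib

open Filter Set MeasureTheory

/-- `N` is a norm on `ℝⁿ`. -/
def IsNorm {n : ℕ} (N : (Fin n → ℝ) → ℝ) : Prop :=
  (∀ x, N x = 0 ↔ x = 0) ∧ (∀ (c : ℝ) x, N (c • x) = |c| * N x) ∧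
    (∀ x y, N (x + y) ≤ N x + N y)

/-- The matrix norm induced by the vector norm `N`. -/
noncomputable def opNorm {n : ℕ} (N : (Fin n → ℝ) → ℝ)
    (A : Matrix (Fin n) (Fin n) ℝ) : ℝ :=
  sSup ((fun x => N (A.mulVec x)) '' {x | N x = 1})

/-- `m` is the matrix measure of `A` induced by the vector norm `N`. -/
def HasMatrixMeasure {n : ℕ} (N : (Fin n → ℝ) → ℝ)
    (A : Matrix (Fin n) (Fin n) ℝ) (m : ℝ) : Prop :=
  Tendsto (fun h : ℝ => (opNorm N (1 + h • A) - 1) / h)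
    (nhdsWithin 0 (Ioi 0)) (nhds m)

/-!
For `z ∉ S` the gradient `d(z)` of `N` satisfies `|d(z) v| ≤ N v`. The mean value inequality
along the segment from `x₂` to `x₁` bounds `d(z)(F x₁ - F x₂)` by the values `d(z)(J y (x₁ - x₂))`
with `y` on the segment. Splitting `x₁ - x₂ = z + (x₁ - x₂ - z)`, the first part is at most
`μ(J y) N z ≤ c N z` (compare the slope of `N` along `z + h J z` with the induced norm of
`1 + h J`), and the second is at most `M ‖x₁ - x₂ - z‖`, with `M` a bound for `J` on the compact
segment. This majorant tends to `c N(x₁ - x₂)` as `z → x₁ - x₂`, and the limsup is over a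
nontrivial filter since a null set has dense complement.
-/

open scoped Topology Matrix Matrix.Norms.Operator

theorem Seminorm.fderiv_apply_le {E : Type*} [NormedAddCommGroup E] [NormedSpace ℝ E]
    (p : Seminorm ℝ E) {z : E} (hz : DifferentiableAt ℝ p z) (v : E) : fderiv ℝ p z v ≤ p v := by
  refine le_of_tendsto (hz.hasFDerivAt.hasLineDerivAt v).tendsto_slope_zero_right ?_
  filter_upwards [self_mem_nhdsWithin] with s (hs : 0 < s)
  have htri := map_add_le_add p z (s • v)
  rw [map_smul_eq_mul, Real.norm_of_nonneg hs.le] at htri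
  rw [smul_eq_mul, inv_mul_le_iff₀ hs]
  linarith

theorem Seminorm.abs_fderiv_apply_le {E : Type*} [NormedAddCommGroup E] [NormedSpace ℝ E]
    (p : Seminorm ℝ E) {z : E} (hz : DifferentiableAt ℝ p z) (v : E) : |fderiv ℝ p z v| ≤ p v := by
  refine abs_le.2 ⟨?_, p.fderiv_apply_le hz v⟩
  have hneg := p.fderiv_apply_le hz (-v)
  rw [map_neg, map_neg_eq_map] at hneg
  linarith

theorem Convex.sub_le_of_hasFDerivWithinAt_apply_le {E : Type*} [NormedAddCommGroup E]
    [NormedSpace ℝ E] {s : Set E} (hs : Convex ℝ s) {f : E → ℝ} {f' : E → E →L[ℝ] ℝ}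
    (hf : ∀ x ∈ s, HasFDerivWithinAt f (f' x) s x) {x y : E} (hx : x ∈ s) (hy : y ∈ s) {K : ℝ}
    (hK : ∀ z ∈ segment ℝ x y, f' z (y - x) ≤ K) : f y - f x ≤ K := by
  set γ : ℝ → E := fun θ => x + θ • (y - x)
  have hγs : MapsTo γ (Icc 0 1) s := fun θ hθ => hs.add_smul_sub_mem hx hy hθ
  have hγ' : ∀ θ, HasDerivAt γ (y - x) θ := fun θ =>
    (((hasDerivAt_id' θ).smul_const (y - x)).const_add x).congr_deriv (one_smul ℝ _)
  have hderiv : ∀ θ ∈ Icc (0 : ℝ) 1,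
      HasDerivWithinAt (f ∘ γ) (f' (γ θ) (y - x)) (Icc 0 1) θ := fun θ hθ =>
    (hf _ (hγs hθ)).comp_hasDerivWithinAt θ (hγ' θ).hasDerivWithinAt hγs
  obtain ⟨θ, hθ, hslope⟩ := exists_hasDerivAt_eq_slope (f ∘ γ) (fun θ => f' (γ θ) (y - x))
    zero_lt_one (fun θ hθ => (hderiv θ hθ).continuousWithinAt)
    (fun θ hθ => (hderiv θ (Ioo_subset_Icc_self hθ)).hasDerivAt (Icc_mem_nhds hθ.1 hθ.2))
  have hγ₀ : γ 0 = x := by simp [γ]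
  have hγ₁ : γ 1 = y := by simp [γ]
  have hK' := hK (γ θ) (segment_eq_image' ℝ x y ▸ mem_image_of_mem γ (Ioo_subset_Icc_self hθ))
  simpa [hslope, hγ₀, hγ₁] using hK'

theorem neBot_nhdsWithin_setOf_sub_mem {E : Type*} [AddGroup E] [TopologicalSpace E]
    [IsTopologicalAddGroup E] {s : Set E} (hs : Dense s) (x₁ x₂ : E) :
    (𝓝[{p : E × E | p.1 - p.2 ∈ s}] (x₁, x₂)).NeBot := by
  rw [← mem_closure_iff_nhdsWithin_neBot]
  simpa using map_mem_closure (f := fun u => (u + x₂, x₂)) (by fun_prop) (hs (x₁ - x₂))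
    (fun u hu => by simpa using hu)

variable {n : ℕ} {N : (Fin n → ℝ) → ℝ}

namespace IsNorm

theorem smul (hN : IsNorm N) (c : ℝ) (x : Fin n → ℝ) : N (c • x) = |c| * N x := hN.2.1 c x

theorem zero (hN : IsNorm N) : N 0 = 0 := (hN.1 0).2 rfl

def toSeminorm (hN : IsNorm N) : Seminorm ℝ (Fin n → ℝ) :=
  Seminorm.of N hN.2.2 hN.smul

theorem nonneg (hN : IsNorm N) (x : Fin n → ℝ) : 0 ≤ N x := apply_nonneg hN.toSeminorm x

theorem continuous (hN : IsNorm N) : Continuous N :=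
  hN.toSeminorm.convexOn.locallyLipschitz.continuous

theorem pos (hN : IsNorm N) {x : Fin n → ℝ} (hx : x ≠ 0) : 0 < N x :=
  (hN.nonneg x).lt_of_ne' fun h => hx ((hN.1 x).1 h)

theorem exists_le_mul_norm (hN : IsNorm N) : ∃ C, 0 < C ∧ ∀ x, N x ≤ C * ‖x‖ :=
  hN.toSeminorm.bound_of_continuous_normedSpace hN.continuous

theorem exists_mul_norm_le (hN : IsNorm N) : ∃ a > 0, ∀ x, a * ‖x‖ ≤ N x := by
  rcases subsingleton_or_nontrivial (Fin n → ℝ) with _ | _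
  · exact ⟨1, one_pos, fun x => by simp [Subsingleton.elim x 0, hN.zero]⟩
  obtain ⟨x₀, hx₀, hmin⟩ := (isCompact_sphere (0 : Fin n → ℝ) 1).exists_isMinOn
    (NormedSpace.sphere_nonempty.2 zero_le_one) hN.continuous.continuousOn
  refine ⟨N x₀, hN.pos (ne_zero_of_mem_unit_sphere ⟨x₀, hx₀⟩), fun x => ?_⟩
  rcases eq_or_ne x 0 with rfl | hx
  · simp [hN.zero]
  have hx' : ‖x‖⁻¹ • x ∈ Metric.sphere (0 : Fin n → ℝ) 1 := by
    simp [norm_smul, norm_ne_zero_iff.2 hx]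
  have hx₀x : N x₀ ≤ ‖x‖⁻¹ * N x := by simpa [hN.smul] using hmin hx'
  rwa [le_inv_mul_iff₀ (norm_pos_iff.2 hx), mul_comm] at hx₀x

theorem isCompact_setOf_eq_one (hN : IsNorm N) : IsCompact {x | N x = 1} := by
  obtain ⟨a, ha, haN⟩ := hN.exists_mul_norm_le
  refine Metric.isCompact_of_isClosed_isBounded (isClosed_eq hN.continuous continuous_const) ?_
  refine isBounded_iff_forall_norm_le.2 ⟨a⁻¹, fun x (hx : N x = 1) => ?_⟩
  rw [← mul_one a⁻¹, ← hx, le_inv_mul_iff₀ ha]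
  exact haN x

theorem mulVec_le_opNorm_mul (hN : IsNorm N) (A : Matrix (Fin n) (Fin n) ℝ) (x : Fin n → ℝ) :
    N (A *ᵥ x) ≤ opNorm N A * N x := by
  rcases eq_or_ne x 0 with rfl | hx
  · simp [hN.zero]
  have hpos := hN.pos hx
  have hbdd : BddAbove ((fun x => N (A *ᵥ x)) '' {x | N x = 1}) :=
    hN.isCompact_setOf_eq_one.bddAbove_image (hN.continuous.comp (by fun_prop)).continuousOn
  have hunit : N ((N x)⁻¹ • x) = 1 := by
    rw [hN.smul, abs_inv, abs_of_pos hpos, inv_mul_cancel₀ hpos.ne']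
  have hle : N (A *ᵥ ((N x)⁻¹ • x)) ≤ opNorm N A := le_csSup hbdd ⟨_, hunit, rfl⟩
  rw [Matrix.mulVec_smul, hN.smul, abs_inv, abs_of_pos hpos, inv_mul_le_iff₀ hpos] at hle
  linarith

theorem fderiv_mulVec_self_le (hN : IsNorm N) {z : Fin n → ℝ} (hz : DifferentiableAt ℝ N z)
    {A : Matrix (Fin n) (Fin n) ℝ} {m : ℝ} (hA : HasMatrixMeasure N A m) :
    fderiv ℝ N z (A *ᵥ z) ≤ m * N z := by
  refine le_of_tendsto_of_tendsto (hz.hasFDerivAt.hasLineDerivAt _).tendsto_slope_zero_right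
    (hA.mul_const (N z)) ?_
  filter_upwards [self_mem_nhdsWithin] with s (hs : 0 < s)
  have hstep : z + s • A *ᵥ z = (1 + s • A) *ᵥ z := by
    rw [Matrix.add_mulVec, Matrix.one_mulVec, Matrix.smul_mulVec]
  rw [smul_eq_mul, hstep, div_mul_eq_mul_div, le_div_iff₀ hs, inv_mul_eq_div,
    div_mul_cancel₀ _ hs.ne']
  linarith [hN.mulVec_le_opNorm_mul (1 + s • A) z]

theorem exists_mulVec_le_mul_norm {α : Type*} [TopologicalSpace α] (hN : IsNorm N) {K : Set α}
    (hK : IsCompact K) {A : α → Matrix (Fin n) (Fin n) ℝ} (hA : ContinuousOn A K) :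
    ∃ M, ∀ y ∈ K, ∀ v, N (A y *ᵥ v) ≤ M * ‖v‖ := by
  obtain ⟨C, hC, hNC⟩ := hN.exists_le_mul_norm
  obtain ⟨B, hB⟩ := hK.exists_bound_of_continuousOn hA
  refine ⟨C * B, fun y hy v => ?_⟩
  calc N (A y *ᵥ v) ≤ C * ‖A y *ᵥ v‖ := hNC _
    _ ≤ C * (B * ‖v‖) := by
      gcongr
      exact (Matrix.linfty_opNorm_mulVec _ _).trans (by gcongr; exact hB y hy)
    _ = C * B * ‖v‖ := (mul_assoc ..).symm

theorem fderiv_apply_sub_le (hN : IsNorm N) {X : Set (Fin n → ℝ)} (hX : Convex ℝ X)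
    {f : (Fin n → ℝ) → (Fin n → ℝ)} {A : (Fin n → ℝ) → Matrix (Fin n) (Fin n) ℝ}
    (hf : ∀ x ∈ X, HasFDerivWithinAt f (A x).mulVecLin.toContinuousLinearMap X x) {c : ℝ}
    (hμ : ∀ x ∈ X, ∃ m, HasMatrixMeasure N (A x) m ∧ m ≤ c) {x₁ x₂ : Fin n → ℝ} (hx₁ : x₁ ∈ X)
    (hx₂ : x₂ ∈ X) {M : ℝ} (hM : ∀ y ∈ segment ℝ x₂ x₁, ∀ v, N (A y *ᵥ v) ≤ M * ‖v‖)
    {z : Fin n → ℝ} (hz : DifferentiableAt ℝ N z) :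
    fderiv ℝ N z (f x₁ - f x₂) ≤ c * N z + M * ‖x₁ - x₂ - z‖ := by
  set L := fderiv ℝ N z
  rw [map_sub]
  refine hX.sub_le_of_hasFDerivWithinAt_apply_le
    (fun x hx => L.hasFDerivAt.comp_hasFDerivWithinAt x (hf x hx)) hx₂ hx₁ fun y hy => ?_
  obtain ⟨m, hm, hmc⟩ := hμ y (hX.segment_subset hx₂ hx₁ hy)
  have hsplit : A y *ᵥ (x₁ - x₂) = A y *ᵥ z + A y *ᵥ (x₁ - x₂ - z) := by
    rw [← Matrix.mulVec_add, add_sub_cancel]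
  have hmain : L (A y *ᵥ z) ≤ c * N z :=
    (hN.fderiv_mulVec_self_le hz hm).trans (mul_le_mul_of_nonneg_right hmc (hN.nonneg z))
  have herr : L (A y *ᵥ (x₁ - x₂ - z)) ≤ M * ‖x₁ - x₂ - z‖ :=
    (hN.toSeminorm.fderiv_apply_le hz _).trans (hM y hy _)
  change L (A y *ᵥ (x₁ - x₂)) ≤ _
  rw [hsplit, map_add]
  exact add_le_add hmain herr

end IsNorm

theorem clarke_limsup_gradient_bound_general (n : ℕ)
    (N : (Fin n → ℝ) → ℝ) (hN : IsNorm N)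
    (S : Set (Fin n → ℝ)) (hS : volume S = 0)
    (hNd : ∀ z ∉ S, DifferentiableAt ℝ N z)
    (X : Set (Fin n → ℝ)) (hX : Convex ℝ X)
    (F : ℝ → (Fin n → ℝ) → (Fin n → ℝ))
    (J : ℝ → (Fin n → ℝ) → Matrix (Fin n) (Fin n) ℝ)
    (hJc : ContinuousOn (fun p : ℝ × (Fin n → ℝ) => J p.1 p.2) (Ici 0 ×ˢ X))
    (hFd : ∀ t, 0 ≤ t → ∀ x ∈ X,
      HasFDerivWithinAt (F t) ((J t x).mulVecLin.toContinuousLinearMap) X x)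
    (c : ℝ)
    (hμ : ∀ t, 0 ≤ t → ∀ x ∈ X,
      ∃ m : ℝ, HasMatrixMeasure N (J t x) m ∧ m ≤ c)
    (t : ℝ) (ht : 0 ≤ t) (x₁ : Fin n → ℝ) (hx₁ : x₁ ∈ X)
    (x₂ : Fin n → ℝ) (hx₂ : x₂ ∈ X) :
    Filter.limsup
        (fun p : (Fin n → ℝ) × (Fin n → ℝ) =>
          fderiv ℝ N (p.1 - p.2) (F t x₁ - F t x₂))
        (nhdsWithin (x₁, x₂) {p | p.1 - p.2 ∉ S})
      ≤ c * N (x₁ - x₂) := by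
  have hseg : IsCompact (segment ℝ x₂ x₁) :=
    segment_eq_image' ℝ x₂ x₁ ▸ isCompact_Icc.image (by fun_prop)
  have hJt : ContinuousOn (J t) (segment ℝ x₂ x₁) :=
    hJc.comp (Continuous.prodMk_right t).continuousOn fun y hy =>
      ⟨ht, hX.segment_subset hx₂ hx₁ hy⟩
  obtain ⟨M, hM⟩ := hN.exists_mulVec_le_mul_norm hseg hJt
  set l := 𝓝[{p : (Fin n → ℝ) × (Fin n → ℝ) | p.1 - p.2 ∉ S}] (x₁, x₂)
  have : l.NeBot := neBot_nhdsWithin_setOf_sub_mem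
    (Measure.dense_of_ae (measure_eq_zero_iff_ae_notMem.1 hS)) x₁ x₂
  set g : (Fin n → ℝ) → ℝ := fun z => c * N z + M * ‖x₁ - x₂ - z‖
  have hlim : Tendsto (fun p : (Fin n → ℝ) × (Fin n → ℝ) => g (p.1 - p.2)) l
      (𝓝 (c * N (x₁ - x₂))) := by
    have hg : Continuous g := by have := hN.continuous; fun_prop
    have hsub : Tendsto (fun p : (Fin n → ℝ) × (Fin n → ℝ) => p.1 - p.2) l (𝓝 (x₁ - x₂)) :=
      ((continuous_fst.sub continuous_snd).tendsto (x₁, x₂)).mono_left nhdsWithin_le_nhds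
    have hg₀ : g (x₁ - x₂) = c * N (x₁ - x₂) := by simp [g]
    exact hg₀ ▸ (hg.tendsto (x₁ - x₂)).comp hsub
  refine (limsup_le_limsup ?_
    (isCoboundedUnder_le_of_eventually_le l (x := -N (F t x₁ - F t x₂)) ?_)
    hlim.isBoundedUnder_le).trans_eq hlim.limsup_eq
  · filter_upwards [self_mem_nhdsWithin] with p hp
    exact hN.fderiv_apply_sub_le hX (hFd t ht) (hμ t ht) hx₁ hx₂ hM (hNd _ hp)
  · filter_upwards [self_mem_nhdsWithin] with p hp
    exact neg_le_of_abs_le (hN.toSeminorm.abs_fderiv_apply_le (hNd _ hp) _)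

/-- under the contraction hypotheses (`μ(∂F/∂x(t,x)) ≤ c` on a
convex invariant set `𝒳`), for all `x₁, x₂ ∈ 𝒳` and `t ≥ 0`:
`limsup_{(z₁,z₂)→(x₁,x₂), z₁−z₂∉S} d(z₁−z₂)·(F(t,x₁) − F(t,x₂)) ≤ c |x₁ − x₂|`,
where `d(z) = ∇|z|` for `z ∉ S`. -/
theorem clarke_limsup_gradient_bound (n : ℕ) (hn : 0 < n)
    (N : (Fin n → ℝ) → ℝ) (hN : IsNorm N)
    (S : Set (Fin n → ℝ)) (hS : volume S = 0)
    (hNd : ∀ z ∉ S, DifferentiableAt ℝ N z)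
    (X : Set (Fin n → ℝ)) (hX : Convex ℝ X)
    (F : ℝ → (Fin n → ℝ) → (Fin n → ℝ))
    (J : ℝ → (Fin n → ℝ) → Matrix (Fin n) (Fin n) ℝ)
    (hFc : ContinuousOn (fun p : ℝ × (Fin n → ℝ) => F p.1 p.2) (Ici 0 ×ˢ X))
    (hJc : ContinuousOn (fun p : ℝ × (Fin n → ℝ) => J p.1 p.2) (Ici 0 ×ˢ X))
    (hFd : ∀ t, 0 ≤ t → ∀ x ∈ X,
      HasFDerivWithinAt (F t) ((J t x).mulVecLin.toContinuousLinearMap) X x)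
    (c : ℝ)
    (hμ : ∀ t, 0 ≤ t → ∀ x ∈ X,
      ∃ m : ℝ, HasMatrixMeasure N (J t x) m ∧ m ≤ c)
    (t : ℝ) (ht : 0 ≤ t) (x₁ : Fin n → ℝ) (hx₁ : x₁ ∈ X)
    (x₂ : Fin n → ℝ) (hx₂ : x₂ ∈ X) :
    Filter.limsup
        (fun p : (Fin n → ℝ) × (Fin n → ℝ) =>
          fderiv ℝ N (p.1 - p.2) (F t x₁ - F t x₂))
        (nhdsWithin (x₁, x₂) {p | p.1 - p.2 ∉ S})
      ≤ c * N (x₁ - x₂) :=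
  clarke_limsup_gradient_bound_general n N hN S hS hNd X hX F J hJc hFd c hμ t ht x₁ hx₁ x₂ hx₂
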